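/- (Proposition 1: MSE improvement over one hop.) Let A and B be independent, nonnegative, square-integrable real random variables (forward and reverse queuing delays at a hop), let x > 0 and R ≥ 1, and define the corrected variables A_R := A − x·Σ_{i=1}^{R} 1{A > i·x} and B_R := B − x·Σ_{i=1}^{R} 1{B > i·x}. Assume: (C1) for every 1 ≤ r ≤ R, x ≥ 2·E[A]/(1 + (2r−1)·P(A > r·x)) and x ≥ 2·E[B]/(1 + (2r−1)·P(B > r·x)); (C2) E[A] > E[B] and P(A > r·x) > P(B > r·x) for all 1 ≤ r ≤ R; (C3) x < 2·(E[A] − E[B]) / Σ_{r=1}^{R}( P(A > r·x) − P(B > r·x) ). Then the mean-squared offset estimation error does not increase: E[(A_R − B_R)²]/4 ≤ E[(A − B)²]/4. -/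

import Mathlib

/-!
Write `N y` for the number of thresholds `i x` (`1 ≤ i ≤ R`) below `y`, so that
`A_R - B_R = D - x U` with `D = A - B` and `U = N A - N B`; it suffices to show
`x E[U²] ≤ 2 E[D U]`. The indicators `1{y > r x}` are nonincreasing in `r` and take values in
`{0, 1}`, so `N y ^ 2 = Σ (2r - 1) 1{y > r x}` and hence `x (N y ^ 2 + N y) ≤ 2 y N y`. With
independence this reduces the claim to `2 E[A] Q + 2 E[B] P ≤ x (P + Q + 2 P Q)`, where
`P = Σ P(A > r x)` and `Q = Σ P(B > r x)`. Multiplying (C1) for `A` by `P(B > r x)` (and vice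
versa) and summing gives this, once `Σ (2r - 1) p_r q_r ≤ P Q` for the nonincreasing tails
`p`, `q`, which follows from `Σ_{r,s} f (max r s) = Σ (2r - 1) f r`.
-/

open MeasureTheory ProbabilityTheory Finset
open scoped ProbabilityTheory

/-- The marked-corrected variable `Y_R := Y − x·Σ_{i=1}^{R} 1{Y > i·x}`. -/
noncomputable def markedCorrected {Ω : Type*} (Y : Ω → ℝ) (x : ℝ) (R : ℕ) : Ω → ℝ :=
  fun ω => Y ω - x * ∑ i ∈ Finset.Icc 1 R, (if (i : ℝ) * x < Y ω then (1 : ℝ) else 0)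

theorem Finset.sum_Icc_sum_Icc_max {M : Type*} [CommRing M] (f : ℕ → M) (R : ℕ) :
    ∑ r ∈ Icc 1 R, ∑ s ∈ Icc 1 R, f (max r s) = ∑ r ∈ Icc 1 R, (2 * (r : M) - 1) * f r := by
  induction R with
  | zero => simp
  | succ n ih =>
    have hmax_left : ∀ r ∈ Icc 1 n, f (max r (n + 1)) = f (n + 1) := fun r hr => by
      rw [max_eq_right (by simp at hr; omega)]
    have hmax_right : ∀ s ∈ Icc 1 n, f (max (n + 1) s) = f (n + 1) := fun s hs => by
      rw [max_eq_left (by simp at hs; omega)]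
    simp only [sum_Icc_succ_top (Nat.le_add_left 1 n), sum_add_distrib, ih, max_self,
      sum_congr rfl hmax_left, sum_congr rfl hmax_right, sum_const, Nat.card_Icc, nsmul_eq_mul]
    push_cast
    ring

theorem Finset.sum_Icc_mul_mul_le_sum_mul_sum {α : Type*} [CommRing α] [PartialOrder α]
    [IsOrderedRing α] {f g : ℕ → α} (hf : Antitone f) (hg : Antitone g)
    (hf0 : ∀ r, 0 ≤ f r) (hg0 : ∀ r, 0 ≤ g r) (R : ℕ) :
    ∑ r ∈ Icc 1 R, (2 * (r : α) - 1) * (f r * g r)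
      ≤ (∑ r ∈ Icc 1 R, f r) * ∑ s ∈ Icc 1 R, g s := by
  rw [← sum_Icc_sum_Icc_max (fun r => f r * g r), sum_mul_sum]
  refine sum_le_sum fun r _ => sum_le_sum fun s _ => ?_
  exact mul_le_mul (hf (le_max_left r s)) (hg (le_max_right r s)) (hg0 _) (hf0 _)

noncomputable def exceedCount (x : ℝ) (R : ℕ) (y : ℝ) : ℝ :=
  ∑ i ∈ Icc 1 R, if (i : ℝ) * x < y then 1 else 0

theorem markedCorrected_apply {Ω : Type*} (Y : Ω → ℝ) (x : ℝ) (R : ℕ) (ω : Ω) :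
    markedCorrected Y x R ω = Y ω - x * exceedCount x R (Y ω) := rfl

namespace exceedCount

variable {x : ℝ} {R : ℕ}

theorem measurable : Measurable (exceedCount x R) :=
  Finset.measurable_sum _ fun _ _ => Measurable.ite measurableSet_Ioi measurable_const
    measurable_const

theorem norm_le (y : ℝ) : ‖exceedCount x R y‖ ≤ R := by
  calc ‖exceedCount x R y‖ ≤ ∑ i ∈ Icc 1 R, ‖if (i : ℝ) * x < y then (1 : ℝ) else 0‖ :=
        norm_sum_le _ _
    _ ≤ ∑ i ∈ Icc 1 R, (1 : ℝ) := sum_le_sum fun i _ => by split_ifs <;> simp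
    _ = R := by simp

theorem sq_eq (hx : 0 ≤ x) (y : ℝ) :
    exceedCount x R y ^ 2
      = ∑ r ∈ Icc 1 R, (2 * (r : ℝ) - 1) * if (r : ℝ) * x < y then 1 else 0 := by
  rw [← sum_Icc_sum_Icc_max (fun r => if (r : ℝ) * x < y then (1 : ℝ) else 0), exceedCount, sq,
    sum_mul_sum]
  refine sum_congr rfl fun r _ => sum_congr rfl fun s _ => ?_
  rw [Nat.cast_max, max_mul_of_nonneg _ _ hx]
  by_cases hr : (r : ℝ) * x < y <;> by_cases hs : (s : ℝ) * x < y <;> simp [hr, hs]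

theorem mul_sq_add_le (hx : 0 ≤ x) (y : ℝ) :
    x * (exceedCount x R y ^ 2 + exceedCount x R y) ≤ 2 * y * exceedCount x R y := by
  rw [sq_eq hx, exceedCount, mul_sum, ← sum_add_distrib, mul_sum]
  refine sum_le_sum fun r _ => ?_
  split_ifs with h <;> nlinarith

end exceedCount

section Thresholds

variable {x a b : ℝ} {R : ℕ} {p q : ℕ → ℝ}

theorem two_mul_mul_sum_le (hp0 : ∀ r, 0 ≤ p r) (hq0 : ∀ r, 0 ≤ q r)
    (ha : ∀ r : ℕ, 1 ≤ r → r ≤ R → x ≥ 2 * a / (1 + (2 * (r : ℝ) - 1) * p r)) :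
    2 * a * ∑ r ∈ Icc 1 R, q r
      ≤ x * ∑ r ∈ Icc 1 R, q r + x * ∑ r ∈ Icc 1 R, (2 * (r : ℝ) - 1) * (p r * q r) := by
  rw [mul_sum, mul_sum, mul_sum, ← sum_add_distrib]
  refine sum_le_sum fun r hr => ?_
  obtain ⟨h1, h2⟩ := mem_Icc.mp hr
  have hr1 : (1 : ℝ) ≤ r := by exact_mod_cast h1
  have hd : 0 < 1 + (2 * (r : ℝ) - 1) * p r := by nlinarith [hp0 r]
  have := (div_le_iff₀ hd).mp (ha r h1 h2)
  nlinarith [hq0 r]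

theorem margin_nonneg_of_threshold_le (hx : 0 ≤ x) (hp : Antitone p) (hq : Antitone q)
    (hp0 : ∀ r, 0 ≤ p r) (hq0 : ∀ r, 0 ≤ q r)
    (ha : ∀ r : ℕ, 1 ≤ r → r ≤ R → x ≥ 2 * a / (1 + (2 * (r : ℝ) - 1) * p r))
    (hb : ∀ r : ℕ, 1 ≤ r → r ≤ R → x ≥ 2 * b / (1 + (2 * (r : ℝ) - 1) * q r)) :
    0 ≤ (x - 2 * a) * ∑ r ∈ Icc 1 R, q r + (x - 2 * b) * ∑ r ∈ Icc 1 R, p r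
      + 2 * x * ((∑ r ∈ Icc 1 R, p r) * ∑ r ∈ Icc 1 R, q r) := by
  have hqa := two_mul_mul_sum_le hp0 hq0 ha
  have hpb := two_mul_mul_sum_le hq0 hp0 hb
  simp only [mul_comm (q _) (p _)] at hpb
  have hM := mul_le_mul_of_nonneg_left (sum_Icc_mul_mul_le_sum_mul_sum hp hq hp0 hq0 R) hx
  linarith

end Thresholds

/-- A lower bound (by `exceedCount.mul_sq_add_le`) for the pointwise gain
`2 (a - b) (N a - N b) - x (N a - N b)²` of marking, `N = exceedCount x R`, whose expectation for
independent `a`, `b` involves only their means and tail probabilities. -/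
noncomputable def markMargin (x : ℝ) (R : ℕ) (a b : ℝ) : ℝ :=
  (x - 2 * a) * exceedCount x R b + (x - 2 * b) * exceedCount x R a
    + 2 * x * (exceedCount x R a * exceedCount x R b)

theorem sq_sub_sub_le_sq_sub_mul_markMargin {x : ℝ} (hx : 0 ≤ x) (R : ℕ) (a b : ℝ) :
    (a - x * exceedCount x R a - (b - x * exceedCount x R b)) ^ 2
      ≤ (a - b) ^ 2 - x * markMargin x R a b := by
  have ha := exceedCount.mul_sq_add_le (R := R) hx a
  have hb := exceedCount.mul_sq_add_le (R := R) hx b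
  unfold markMargin
  nlinarith [mul_le_mul_of_nonneg_left (add_le_add ha hb) hx]

section Probability

variable {Ω : Type*} {m : MeasurableSpace Ω} {μ : Measure Ω} {x : ℝ} {R : ℕ} {A B Y : Ω → ℝ}

theorem integral_ite_lt_eq_measureReal (hY : AEMeasurable Y μ) (c : ℝ) :
    ∫ ω, (if c < Y ω then (1 : ℝ) else 0) ∂μ = μ.real {ω | c < Y ω} := by
  have hind : (fun ω => if c < Y ω then (1 : ℝ) else 0) = {ω | c < Y ω}.indicator 1 := by
    ext ω
    simp [Set.indicator_apply]
  rw [hind, integral_indicator₀ (nullMeasurableSet_lt aemeasurable_const hY)]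
  simp

theorem antitone_measureReal_mul_lt [IsFiniteMeasure μ] (hx : 0 ≤ x) (Y : Ω → ℝ) :
    Antitone fun r : ℕ => μ.real {ω | (r : ℝ) * x < Y ω} := fun r s hrs =>
  measureReal_mono fun _ hω =>
    (mul_le_mul_of_nonneg_right (Nat.cast_le.mpr hrs) hx).trans_lt hω

theorem MeasureTheory.Integrable.mul_exceedCount_comp {f : Ω → ℝ} (hf : Integrable f μ)
    (hY : AEMeasurable Y μ) : Integrable (fun ω => f ω * exceedCount x R (Y ω)) μ :=
  hf.mul_bdd (exceedCount.measurable.comp_aemeasurable hY).aestronglyMeasurable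
    (ae_of_all _ fun _ => exceedCount.norm_le _)

theorem integrable_exceedCount_comp [IsFiniteMeasure μ] (hY : AEMeasurable Y μ) :
    Integrable (fun ω => exceedCount x R (Y ω)) μ := by
  simpa using (integrable_const (1 : ℝ)).mul_exceedCount_comp (x := x) (R := R) hY

theorem integral_exceedCount_comp [IsFiniteMeasure μ] (hY : AEMeasurable Y μ) :
    ∫ ω, exceedCount x R (Y ω) ∂μ = ∑ r ∈ Icc 1 R, μ.real {ω | (r : ℝ) * x < Y ω} := by
  have hint : ∀ c : ℝ, Integrable (fun ω => if c < Y ω then (1 : ℝ) else 0) μ := fun c =>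
    Integrable.of_bound
      ((Measurable.ite measurableSet_Ioi measurable_const measurable_const).comp_aemeasurable
        hY).aestronglyMeasurable 1 (ae_of_all _ fun _ => by split_ifs <;> simp)
  simp only [exceedCount]
  rw [integral_finsetSum _ fun r _ => hint _]
  exact sum_congr rfl fun r _ => integral_ite_lt_eq_measureReal hY _

theorem integrable_markMargin [IsFiniteMeasure μ] (hA : Integrable A μ) (hB : Integrable B μ) :
    Integrable (fun ω => markMargin x R (A ω) (B ω)) μ :=
  ((((integrable_const x).sub (hA.const_mul 2)).mul_exceedCount_comp hB.aemeasurable).add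
    (((integrable_const x).sub (hB.const_mul 2)).mul_exceedCount_comp hA.aemeasurable)).add
    (((integrable_exceedCount_comp hA.aemeasurable).mul_exceedCount_comp
      hB.aemeasurable).const_mul _)

theorem integral_markMargin [IsProbabilityMeasure μ] (hAB : IndepFun A B μ)
    (hA : Integrable A μ) (hB : Integrable B μ) :
    ∫ ω, markMargin x R (A ω) (B ω) ∂μ
      = (x - 2 * ∫ ω, A ω ∂μ) * ∑ r ∈ Icc 1 R, μ.real {ω | (r : ℝ) * x < B ω}
        + (x - 2 * ∫ ω, B ω ∂μ) * ∑ r ∈ Icc 1 R, μ.real {ω | (r : ℝ) * x < A ω}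
        + 2 * x * ((∑ r ∈ Icc 1 R, μ.real {ω | (r : ℝ) * x < A ω})
          * ∑ r ∈ Icc 1 R, μ.real {ω | (r : ℝ) * x < B ω}) := by
  have hmeas : Measurable fun y : ℝ => x - 2 * y := by fun_prop
  have hAmeas := hA.aemeasurable
  have hBmeas := hB.aemeasurable
  have h1 : Integrable (fun ω => (x - 2 * A ω) * exceedCount x R (B ω)) μ :=
    ((integrable_const x).sub (hA.const_mul 2)).mul_exceedCount_comp hBmeas
  have h2 : Integrable (fun ω => (x - 2 * B ω) * exceedCount x R (A ω)) μ :=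
    ((integrable_const x).sub (hB.const_mul 2)).mul_exceedCount_comp hAmeas
  have h3 : Integrable (fun ω => exceedCount x R (A ω) * exceedCount x R (B ω)) μ :=
    (integrable_exceedCount_comp hAmeas).mul_exceedCount_comp hBmeas
  have hlin : ∀ {Y : Ω → ℝ}, Integrable Y μ → ∫ ω, x - 2 * Y ω ∂μ = x - 2 * ∫ ω, Y ω ∂μ :=
    fun hY => by rw [integral_sub (integrable_const x) (hY.const_mul 2), integral_const_mul]; simp
  have h12 : Integrable (fun ω => (x - 2 * A ω) * exceedCount x R (B ω)
      + (x - 2 * B ω) * exceedCount x R (A ω)) μ := h1.add h2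
  simp only [markMargin]
  rw [integral_add h12 (h3.const_mul _), integral_add h1 h2, integral_const_mul,
    hAB.integral_fun_comp_mul_comp hAmeas hBmeas hmeas.aestronglyMeasurable
      exceedCount.measurable.aestronglyMeasurable,
    hAB.symm.integral_fun_comp_mul_comp hBmeas hAmeas hmeas.aestronglyMeasurable
      exceedCount.measurable.aestronglyMeasurable,
    hAB.integral_fun_comp_mul_comp hAmeas hBmeas exceedCount.measurable.aestronglyMeasurable
      exceedCount.measurable.aestronglyMeasurable,
    hlin hA, hlin hB, integral_exceedCount_comp hAmeas, integral_exceedCount_comp hBmeas]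

end Probability

theorem one_hop_mse_improvement_general
    {Ω : Type*} [MeasureSpace Ω] [IsProbabilityMeasure (ℙ : Measure Ω)]
    (A B : Ω → ℝ)
    (hLA : MemLp A 2 ℙ) (hLB : MemLp B 2 ℙ)
    (hindep : IndepFun A B ℙ)
    (x : ℝ) (hx : 0 < x) (R : ℕ)
    -- (C1): the threshold lies in the improvement region for both directions
    (hC1A : ∀ r : ℕ, 1 ≤ r → r ≤ R →
      x ≥ 2 * 𝔼[A]
        / (1 + (2 * (r : ℝ) - 1) * (ℙ {ω | (r : ℝ) * x < A ω}).toReal))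
    (hC1B : ∀ r : ℕ, 1 ≤ r → r ≤ R →
      x ≥ 2 * 𝔼[B]
        / (1 + (2 * (r : ℝ) - 1) * (ℙ {ω | (r : ℝ) * x < B ω}).toReal)) :
    𝔼[fun ω => (markedCorrected A x R ω - markedCorrected B x R ω) ^ 2] / 4
      ≤ 𝔼[fun ω => (A ω - B ω) ^ 2] / 4 := by
  have hIA := hLA.integrable one_le_two
  have hIB := hLB.integrable one_le_two
  have hmargin : 0 ≤ ∫ ω, markMargin x R (A ω) (B ω) := by
    rw [integral_markMargin hindep hIA hIB]
    exact margin_nonneg_of_threshold_le hx.le (antitone_measureReal_mul_lt hx.le A)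
      (antitone_measureReal_mul_lt hx.le B) (fun _ => measureReal_nonneg)
      (fun _ => measureReal_nonneg) hC1A hC1B
  have hsq : Integrable (fun ω => (A ω - B ω) ^ 2) ℙ := (hLA.sub hLB).integrable_sq
  have hW := (integrable_markMargin (x := x) (R := R) hIA hIB).const_mul x
  calc _ ≤ (∫ ω, (A ω - B ω) ^ 2 - x * markMargin x R (A ω) (B ω)) / 4 := by
        gcongr ?_ / _
        refine integral_mono_of_nonneg (ae_of_all _ fun _ => sq_nonneg _) (hsq.sub hW)
          (ae_of_all _ fun ω => ?_)
        simpa only [markedCorrected_apply] using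
          sq_sub_sub_le_sq_sub_mul_markMargin hx.le R (A ω) (B ω)
    _ = ((∫ ω, (A ω - B ω) ^ 2) - x * ∫ ω, markMargin x R (A ω) (B ω)) / 4 := by
        rw [integral_sub hsq hW, integral_const_mul]
    _ ≤ _ := by gcongr; exact sub_le_self _ (mul_nonneg hx.le hmargin)

/-- **Proposition 1: MSE improvement over one hop.**
Under conditions (C1), (C2), (C3), congestion marking does not increase the
mean-squared offset estimation error: `E[(A_R − B_R)²]/4 ≤ E[(A − B)²]/4`. -/
theorem one_hop_mse_improvement
    {Ω : Type*} [MeasureSpace Ω] [IsProbabilityMeasure (ℙ : Measure Ω)]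
    (A B : Ω → ℝ) (hmA : Measurable A) (hmB : Measurable B)
    (hLA : MemLp A 2 ℙ) (hLB : MemLp B 2 ℙ)
    (hposA : ∀ᵐ ω ∂(ℙ : Measure Ω), 0 ≤ A ω)
    (hposB : ∀ᵐ ω ∂(ℙ : Measure Ω), 0 ≤ B ω)
    (hindep : IndepFun A B ℙ)
    (x : ℝ) (hx : 0 < x) (R : ℕ) (hR : 1 ≤ R)
    -- (C1): the threshold lies in the improvement region for both directions
    (hC1A : ∀ r : ℕ, 1 ≤ r → r ≤ R →
      x ≥ 2 * 𝔼[A]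
        / (1 + (2 * (r : ℝ) - 1) * (ℙ {ω | (r : ℝ) * x < A ω}).toReal))
    (hC1B : ∀ r : ℕ, 1 ≤ r → r ≤ R →
      x ≥ 2 * 𝔼[B]
        / (1 + (2 * (r : ℝ) - 1) * (ℙ {ω | (r : ℝ) * x < B ω}).toReal))
    -- (C2): larger mean and stochastic dominance at every threshold
    (hC2mean : 𝔼[B] < 𝔼[A])
    (hC2dom : ∀ r : ℕ, 1 ≤ r → r ≤ R →
      (ℙ {ω | (r : ℝ) * x < B ω}).toReal < (ℙ {ω | (r : ℝ) * x < A ω}).toReal)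
    -- (C3): upper bound on the threshold
    (hC3 : x < 2 * (𝔼[A] - 𝔼[B]) / ∑ r ∈ Finset.Icc 1 R,
        ((ℙ {ω | (r : ℝ) * x < A ω}).toReal - (ℙ {ω | (r : ℝ) * x < B ω}).toReal)) :
    𝔼[fun ω => (markedCorrected A x R ω - markedCorrected B x R ω) ^ 2] / 4
      ≤ 𝔼[fun ω => (A ω - B ω) ^ 2] / 4 :=
  one_hop_mse_improvement_general A B hLA hLB hindep x hx R hC1A hC1B
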